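/- arXiv:2311.01533 — 3 statements merged into one kernel-verified Lean document; each statement's English description precedes it below -/
import Mathlib

section
/- Let $\sigma > 0$, $\mu \in \mathbb{R}$, $q \in \mathbb{N}$, and define $x(t) = \frac{1}{\sigma\sqrt{2\pi}}\exp(-t^2/(2\sigma^2))\, e^{2\pi i \mu t}$. Then the truncation error of the cardinal series satisfies $\sup_{t \in \mathbb{R}} \Big| \sum_{n \in \mathbb{Z},\, |n| > q} x(n)\,\mathrm{sinc}(t-n) \Big| \le 2\exp\Big(-\tfrac{q^2}{2\sigma^2}\Big)$. -/
open scoped Real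

/-- Normalized cardinal sine: `sinc x = sin (π x) / (π x)` for `x ≠ 0`, `sinc 0 = 1`. -/
noncomputable def sinc (x : ℝ) : ℝ := if x = 0 then 1 else Real.sin (π * x) / (π * x)

/-!
Since `|sinc| ≤ 1`, the tail is bounded by `c ∑_{|n| > q} exp (-b n²)` with `b = 1 / (2σ²)` and
`c = 1 / (σ √(2π))`. Writing `|n| = q + m` with `m ≥ 1`, `exp (-b n²) ≤ exp (-b q²) exp (-b m²)`,
and by monotonicity `∑_{m ≥ 1} exp (-b m²) ≤ ∫_0^∞ exp (-b x²) = √(π / b) / 2`. Counting both signs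
of `n`, the tail is at most `c exp (-b q²) √(π / b) = exp (-q² / (2σ²))`, the Gaussian having
total mass one.
-/

open Real hiding sinc

lemma sinc_eq_real_sinc_pi_mul (y : ℝ) : sinc y = Real.sinc (π * y) := by
  simp [sinc, Real.sinc, pi_ne_zero]

lemma abs_sinc_le_one (y : ℝ) : |sinc y| ≤ 1 := by
  rw [sinc_eq_real_sinc_pi_mul]
  exact Real.abs_sinc_le_one _

lemma norm_mul_sinc_le (z : ℂ) (y : ℝ) : ‖z * (sinc y : ℂ)‖ ≤ ‖z‖ := by
  rw [norm_mul, Complex.norm_real, Real.norm_eq_abs]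
  exact mul_le_of_le_one_right (norm_nonneg z) (abs_sinc_le_one y)

section GaussianTail

variable {b : ℝ}

lemma sum_range_exp_neg_mul_sq_succ_le (hb : 0 < b) (N : ℕ) :
    ∑ k ∈ Finset.range N, exp (-b * ((k : ℝ) + 1) ^ 2) ≤ √(π / b) / 2 := by
  have hanti : AntitoneOn (fun x : ℝ => exp (-b * x ^ 2)) (Set.Icc 0 (0 + N)) := by
    intro x hx y _ hxy
    have : x ^ 2 ≤ y ^ 2 := pow_le_pow_left₀ hx.1 hxy 2
    dsimp only
    rw [exp_le_exp]
    nlinarith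
  calc ∑ k ∈ Finset.range N, exp (-b * ((k : ℝ) + 1) ^ 2)
      = ∑ k ∈ Finset.range N, exp (-b * (0 + ((k + 1 : ℕ) : ℝ)) ^ 2) := by simp
    _ ≤ ∫ x in (0 : ℝ)..0 + N, exp (-b * x ^ 2) := hanti.sum_le_integral
    _ ≤ ∫ x in Set.Ioi 0, exp (-b * x ^ 2) := by
        rw [zero_add, intervalIntegral.integral_of_le N.cast_nonneg]
        exact MeasureTheory.setIntegral_mono_set (integrable_exp_neg_mul_sq hb).integrableOn
          (.of_forall fun _ => (exp_pos _).le) Set.Ioc_subset_Ioi_self.eventuallyLE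
    _ = √(π / b) / 2 := integral_gaussian_Ioi b

lemma summable_exp_neg_mul_sq_succ (hb : 0 < b) :
    Summable fun k : ℕ => exp (-b * ((k : ℝ) + 1) ^ 2) :=
  summable_of_sum_range_le (fun _ => (exp_pos _).le) (sum_range_exp_neg_mul_sq_succ_le hb)

lemma tsum_exp_neg_mul_sq_succ_le (hb : 0 < b) :
    ∑' k : ℕ, exp (-b * ((k : ℝ) + 1) ^ 2) ≤ √(π / b) / 2 :=
  tsum_le_of_sum_range_le (fun _ => (exp_pos _).le) (sum_range_exp_neg_mul_sq_succ_le hb)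

lemma exp_neg_mul_sq_add_le (hb : 0 ≤ b) {x y : ℝ} (hx : 0 ≤ x) (hy : 0 ≤ y) :
    exp (-b * (x + y) ^ 2) ≤ exp (-b * x ^ 2) * exp (-b * y ^ 2) := by
  rw [← exp_add, exp_le_exp]
  nlinarith [mul_nonneg (mul_nonneg hb hx) hy]

def tailIndex (q : ℕ) (n : {n : ℤ // (q : ℤ) < |n|}) : ℕ ⊕ ℕ :=
  if 0 < (n : ℤ) then .inl (|(n : ℤ)| - q - 1).toNat else .inr (|(n : ℤ)| - q - 1).toNat

lemma tailIndex_injective (q : ℕ) : Function.Injective (tailIndex q) := by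
  rintro ⟨m, hm⟩ ⟨n, hn⟩ h
  simp only [tailIndex] at h
  rw [Subtype.mk.injEq]
  rcases abs_cases m with ⟨hm', _⟩ | ⟨hm', _⟩ <;> rcases abs_cases n with ⟨hn', _⟩ | ⟨hn', _⟩ <;>
    rw [hm'] at h hm <;> rw [hn'] at h hn <;> split_ifs at h <;> simp at h <;> omega

lemma elim_tailIndex {α : Type*} (u : ℕ → α) (q : ℕ) (n : {n : ℤ // (q : ℤ) < |n|}) :
    Sum.elim u u (tailIndex q n) = u (|(n : ℤ)| - q - 1).toNat := by
  unfold tailIndex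
  split_ifs <;> rfl

lemma exp_neg_mul_sq_le_of_lt_abs (hb : 0 ≤ b) {q : ℕ} {n : ℤ} (hn : (q : ℤ) < |n|) :
    exp (-b * (n : ℝ) ^ 2) ≤
      exp (-b * (q : ℝ) ^ 2) * exp (-b * ((|n| - q - 1).toNat + 1 : ℝ) ^ 2) := by
  set k := (|n| - q - 1).toNat with hk
  have habs : |n| = q + ((k : ℤ) + 1) := by omega
  have hsq : (n : ℝ) ^ 2 = ((q : ℝ) + ((k : ℝ) + 1)) ^ 2 := by
    rw [← sq_abs, ← Int.cast_abs, habs]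
    push_cast
    ring
  rw [hsq]
  exact exp_neg_mul_sq_add_le hb (by positivity) (by positivity)

lemma summable_exp_neg_mul_sq_tail (hb : 0 < b) (q : ℕ) :
    Summable fun n : {n : ℤ // (q : ℤ) < |n|} => exp (-b * ((n : ℤ) : ℝ) ^ 2) := by
  set u : ℕ → ℝ := fun k => exp (-b * ((k : ℝ) + 1) ^ 2)
  have hu : Summable u := summable_exp_neg_mul_sq_succ hb
  refine (((Summable.sum (Sum.elim u u) hu hu).mul_left (exp (-b * (q : ℝ) ^ 2))).comp_injective
    (tailIndex_injective q)).of_nonneg_of_le (fun _ => (exp_pos _).le) fun n => ?_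
  simp only [Function.comp_apply, elim_tailIndex]
  exact exp_neg_mul_sq_le_of_lt_abs hb.le n.2

lemma tsum_exp_neg_mul_sq_tail_le (hb : 0 < b) (q : ℕ) :
    ∑' n : {n : ℤ // (q : ℤ) < |n|}, exp (-b * ((n : ℤ) : ℝ) ^ 2) ≤
      exp (-b * (q : ℝ) ^ 2) * √(π / b) := by
  set u : ℕ → ℝ := fun k => exp (-b * ((k : ℝ) + 1) ^ 2)
  have hu : Summable u := summable_exp_neg_mul_sq_succ hb
  calc ∑' n : {n : ℤ // (q : ℤ) < |n|}, exp (-b * ((n : ℤ) : ℝ) ^ 2)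
      ≤ ∑' i, exp (-b * (q : ℝ) ^ 2) * Sum.elim u u i := by
        refine (summable_exp_neg_mul_sq_tail hb q).tsum_le_tsum_of_inj _ (tailIndex_injective q)
          (fun i _ => mul_nonneg (exp_pos _).le (by cases i <;> exact (exp_pos _).le)) (fun n => ?_)
          ((Summable.sum (Sum.elim u u) hu hu).mul_left _)
        rw [elim_tailIndex]
        exact exp_neg_mul_sq_le_of_lt_abs hb.le n.2
    _ = exp (-b * (q : ℝ) ^ 2) * (2 * ∑' k, u k) := by
        rw [tsum_mul_left, Summable.tsum_sum (f := Sum.elim u u) hu hu, two_mul]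
        rfl
    _ ≤ exp (-b * (q : ℝ) ^ 2) * √(π / b) := by
        have := tsum_exp_neg_mul_sq_succ_le hb
        gcongr
        linarith

end GaussianTail

lemma norm_ofReal_mul_exp_two_pi_I_mul (a μ t : ℝ) :
    ‖(a : ℂ) * Complex.exp (2 * π * Complex.I * μ * t)‖ = |a| := by
  rw [norm_mul, Complex.norm_real, Real.norm_eq_abs, Complex.norm_exp]
  simp [Complex.mul_re, Complex.mul_im]

/-- Truncation error bound for the cardinal series of a Gaussian-windowed complex
exponential: the tail over `|n| > q` is uniformly bounded by `2 exp(-q²/(2σ²))`. -/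
theorem sinc_interpolation_truncation_error
    (σ : ℝ) (hσ : 0 < σ) (μ : ℝ) (q : ℕ)
    (x : ℝ → ℂ)
    (hx : ∀ t : ℝ, x t =
      ((1 / (σ * Real.sqrt (2 * π)) * Real.exp (-t ^ 2 / (2 * σ ^ 2)) : ℝ) : ℂ) *
        Complex.exp (2 * (π : ℂ) * Complex.I * (μ : ℂ) * (t : ℂ))) :
    (∀ t : ℝ, Summable fun n : {n : ℤ // (q : ℤ) < |n|} =>
      x ((n : ℤ) : ℝ) * ((sinc (t - ((n : ℤ) : ℝ)) : ℝ) : ℂ)) ∧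
    ∀ t : ℝ,
      ‖(∑' n : {n : ℤ // (q : ℤ) < |n|},
          x ((n : ℤ) : ℝ) * ((sinc (t - ((n : ℤ) : ℝ)) : ℝ) : ℂ))‖ ≤
        2 * Real.exp (-(q : ℝ) ^ 2 / (2 * σ ^ 2)) := by
  set b : ℝ := (2 * σ ^ 2)⁻¹
  set c : ℝ := (σ * √(2 * π))⁻¹
  have hb : 0 < b := by positivity
  have hnorm (n : ℝ) : ‖x n‖ = c * exp (-b * n ^ 2) := by
    rw [hx, norm_ofReal_mul_exp_two_pi_I_mul, abs_of_pos (by positivity), one_div]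
    congr 2
    ring
  have hterm (t : ℝ) (n : {n : ℤ // (q : ℤ) < |n|}) :
      ‖x n * (sinc (t - n) : ℂ)‖ ≤ c * exp (-b * ((n : ℤ) : ℝ) ^ 2) :=
    (norm_mul_sinc_le _ _).trans (hnorm n).le
  have hmaj := (summable_exp_neg_mul_sq_tail hb q).mul_left c
  have hsum (t : ℝ) : Summable fun n : {n : ℤ // (q : ℤ) < |n|} => ‖x n * (sinc (t - n) : ℂ)‖ :=
    hmaj.of_nonneg_of_le (fun _ => norm_nonneg _) (hterm t)
  have hmass : c * √(π / b) = 1 := by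
    rw [div_inv_eq_mul, show π * (2 * σ ^ 2) = σ ^ 2 * (2 * π) by ring,
      sqrt_mul (sq_nonneg σ), sqrt_sq hσ.le]
    exact inv_mul_cancel₀ (by positivity)
  refine ⟨fun t => (hsum t).of_norm, fun t => ?_⟩
  calc _ ≤ ∑' n : {n : ℤ // (q : ℤ) < |n|}, ‖x n * (sinc (t - n) : ℂ)‖ :=
        norm_tsum_le_tsum_norm (hsum t)
    _ ≤ c * ∑' n : {n : ℤ // (q : ℤ) < |n|}, exp (-b * ((n : ℤ) : ℝ) ^ 2) := by
        rw [← tsum_mul_left]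
        exact (hsum t).tsum_le_tsum (hterm t) hmaj
    _ ≤ c * (exp (-b * (q : ℝ) ^ 2) * √(π / b)) := by
        gcongr
        exact tsum_exp_neg_mul_sq_tail_le hb q
    _ = exp (-(q : ℝ) ^ 2 / (2 * σ ^ 2)) := by
        rw [mul_left_comm, hmass, mul_one]
        congr 1
        ring
    _ ≤ 2 * exp (-(q : ℝ) ^ 2 / (2 * σ ^ 2)) := by
        linarith [exp_pos (-(q : ℝ) ^ 2 / (2 * σ ^ 2))]
end

section
/- For every integer $q \ge 0$ and every $t \in \mathbb{R}$, $\sum_{n=-q}^{q} \mathrm{sinc}^2(t - n) \le 3 + \frac{4}{\pi^2}$. -/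
/-!
The integers `n ≤ ⌊t⌋` lie at distances `fract t + j` from `t`, and the integers `n > ⌊t⌋` at
distances `(1 - fract t) + j`, for `j = 0, 1, 2, …`. Bounding `sinc² x` by `1` at the nearest
point of each side and by `1 / (π² x²) ≤ 1 / (π² j²)` elsewhere, each side contributes at most
`1 + ζ(2) / π² = 7 / 6`, so the whole sum is at most `7 / 3 ≤ 3 + 4 / π²`.
-/

open scoped Real

theorem sinc_neg (x : ℝ) : sinc (-x) = sinc x := by
  simp only [sinc, neg_eq_zero, mul_neg, Real.sin_neg, neg_div_neg_eq]

theorem sinc_sq_le_one (x : ℝ) : sinc x ^ 2 ≤ 1 := by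
  rcases eq_or_ne x 0 with rfl | hx
  · simp [sinc]
  · rw [sinc, if_neg hx, div_pow, div_le_one (by positivity)]
    exact Real.sin_sq_le_sq

theorem sinc_sq_le_one_div_sq {x : ℝ} (hx : x ≠ 0) : sinc x ^ 2 ≤ 1 / (π ^ 2 * x ^ 2) := by
  rw [sinc, if_neg hx, div_pow, mul_pow]
  gcongr
  exact Real.sin_sq_le_one _

/-- The `j = 0` case is separate because `1 / (π² j²)` is `0` there. -/
noncomputable def sincSqBound (j : ℕ) : ℝ := if j = 0 then 1 else 1 / (π ^ 2 * j ^ 2)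

theorem sincSqBound_nonneg (j : ℕ) : 0 ≤ sincSqBound j := by
  unfold sincSqBound
  split_ifs <;> positivity

theorem sinc_sq_add_natCast_le {a : ℝ} (ha : 0 ≤ a) (j : ℕ) :
    sinc (a + j) ^ 2 ≤ sincSqBound j := by
  rcases eq_or_ne j 0 with rfl | hj
  · simpa [sincSqBound] using sinc_sq_le_one a
  have hj_pos : (0 : ℝ) < j := by positivity
  calc sinc (a + j) ^ 2 ≤ 1 / (π ^ 2 * (a + j) ^ 2) := sinc_sq_le_one_div_sq (by positivity)
    _ ≤ sincSqBound j := by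
      rw [sincSqBound, if_neg hj]
      gcongr
      linarith

theorem hasSum_sincSqBound : HasSum sincSqBound (1 + 1 / 6) := by
  have basel := hasSum_zeta_two.div_const (π ^ 2)
  rw [div_div_cancel_left' (by positivity)] at basel
  convert (hasSum_ite_eq 0 (1 : ℝ)).add basel using 1
  · ext j
    rcases eq_or_ne j 0 with rfl | hj
    · simp [sincSqBound]
    · simp [sincSqBound, hj, div_eq_inv_mul, mul_comm]
  · norm_num

/-- `sincSqBound` on both sides of `0`, with `0` and `-1` both carrying the value `1`. -/
noncomputable def sincSqBoundInt : ℤ → ℝ := Int.rec sincSqBound sincSqBound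

theorem sincSqBoundInt_nonneg (k : ℤ) : 0 ≤ sincSqBoundInt k := by
  cases k <;> exact sincSqBound_nonneg _

theorem hasSum_sincSqBoundInt : HasSum sincSqBoundInt (7 / 3) := by
  rw [show (7 / 3 : ℝ) = (1 + 1 / 6) + (1 + 1 / 6) by norm_num]
  exact hasSum_sincSqBound.int_rec hasSum_sincSqBound

/-- The shift by `⌊t⌋ + 1` sends the two integers nearest to `t` to the indices `-1` and `0`. -/
theorem sinc_sq_sub_intCast_le (t : ℝ) (n : ℤ) :
    sinc (t - n) ^ 2 ≤ sincSqBoundInt (n - (⌊t⌋ + 1)) := by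
  have hfract_nonneg := Int.fract_nonneg t
  have hfract_lt_one := Int.fract_lt_one t
  rcases h : n - (⌊t⌋ + 1) with j | j
  · rw [Int.ofNat_eq_natCast] at h
    have hn : (n : ℝ) = ⌊t⌋ + 1 + j := by exact_mod_cast (by omega : n = ⌊t⌋ + 1 + j)
    have hdist : t - n = -((1 - Int.fract t) + j) := by
      rw [← Int.self_sub_floor, hn]
      ring
    rw [hdist, sinc_neg]
    exact sinc_sq_add_natCast_le (by linarith) j
  · rw [Int.negSucc_eq] at h
    have hn : (n : ℝ) = ⌊t⌋ - j := by exact_mod_cast (by omega : n = ⌊t⌋ - j)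
    have hdist : t - n = Int.fract t + j := by
      rw [← Int.self_sub_floor, hn]
      ring
    rw [hdist]
    exact sinc_sq_add_natCast_le hfract_nonneg j

theorem sum_sinc_sq_sub_intCast_le (s : Finset ℤ) (t : ℝ) :
    ∑ n ∈ s, sinc (t - n) ^ 2 ≤ 7 / 3 := by
  have hshift : HasSum (fun n : ℤ => sincSqBoundInt (n - (⌊t⌋ + 1))) (7 / 3) :=
    (Equiv.subRight (⌊t⌋ + 1)).hasSum_iff.mpr hasSum_sincSqBoundInt
  calc ∑ n ∈ s, sinc (t - n) ^ 2
      ≤ ∑ n ∈ s, sincSqBoundInt (n - (⌊t⌋ + 1)) :=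
        Finset.sum_le_sum fun n _ => sinc_sq_sub_intCast_le t n
    _ ≤ 7 / 3 := sum_le_hasSum s (fun n _ => sincSqBoundInt_nonneg _) hshift

/-- Squared `ℓ²` bound on the cardinal sine interpolation weights:
`∑_{n=-q}^{q} sinc²(t - n) ≤ 3 + 4/π²` for every real `t`. -/
theorem sinc_weights_l2_sq_bound (q : ℕ) (t : ℝ) :
    ∑ n ∈ Finset.Icc (-(q : ℤ)) (q : ℤ), (sinc (t - (n : ℝ))) ^ 2 ≤ 3 + 4 / π ^ 2 := by
  have : (0 : ℝ) ≤ 4 / π ^ 2 := by positivity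
  linarith [sum_sinc_sq_sub_intCast_le (Finset.Icc (-(q : ℤ)) q) t]
end

section
/- Let $n$ be a positive even integer, let $s_k = \cos\big(\frac{2k-1}{2n}\pi\big)$ and $d_k = \frac{1}{n}(-1)^{k + n/2}\tan\big(\frac{2k-1}{2n}\pi\big)$ for $k = 1, \dots, n$. Then for every polynomial $f$ with real coefficients of degree at most $n - 1$, $\sum_{k=1}^{n} d_k\, f(s_k) = f(0)$. -/
/-! The nodes `s_k = cos θ_k` are exactly the `n` roots of `T_n`, so Lagrange interpolation with
nodal polynomial `T_n` gives `f(0) = ∑ T_n(0) / ((0 - s_k) T_n'(s_k)) f(s_k)` for `deg f < n`.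
For even `n`, `T_n(0) = (-1)^(n/2)`, and `T_n' = n U_{n-1}` with `U_{n-1}(cos θ) sin θ = sin (nθ)`
gives `T_n'(s_k) = -n (-1)^k / sin θ_k`; the quotient is `(-1)^(k + n/2) tan θ_k / n`. -/

open scoped Real

open Polynomial Finset

namespace Lagrange

variable {F ι : Type*} [Field F] {s : Finset ι} {v : ι → F}

theorem eq_C_leadingCoeff_mul_nodal {p : F[X]} (hvs : Set.InjOn v s) (hp : p.degree = #s)
    (hroots : ∀ i ∈ s, p.eval (v i) = 0) : p = C p.leadingCoeff * nodal s v := by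
  have hc : p.leadingCoeff ≠ 0 := leadingCoeff_ne_zero.mpr fun h => by simp [h] at hp
  refine Polynomial.eq_of_degree_le_of_eval_index_eq s hvs hp.le ?_ ?_ fun i hi => ?_
  · rw [degree_C_mul hc, degree_nodal, hp]
  · rw [leadingCoeff_C_mul_of_isUnit hc.isUnit, nodal_monic.leadingCoeff, mul_one]
  · simp [hroots i hi, eval_nodal_at_node hi]

theorem eval_eq_sum_div_mul_eval_derivative {p f : F[X]} (hvs : Set.InjOn v s)
    (hp : p.degree = #s) (hroots : ∀ i ∈ s, p.eval (v i) = 0) (hf : f.degree < #s) {x : F}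
    (hx : ∀ i ∈ s, x ≠ v i) :
    f.eval x = ∑ i ∈ s, p.eval x / ((x - v i) * p.derivative.eval (v i)) * f.eval (v i) := by
  classical
  have hc : p.leadingCoeff ≠ 0 := leadingCoeff_ne_zero.mpr fun h => by simp [h] at hp
  rw [eq_interpolate hvs hf, eval_interpolate_not_at_node _ hx, ← eq_interpolate hvs hf,
    mul_sum, eq_C_leadingCoeff_mul_nodal hvs hp hroots]
  refine sum_congr rfl fun i hi => ?_
  rw [nodalWeight_eq_eval_derivative_nodal hi]
  simp only [derivative_C_mul, eval_mul, eval_C]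
  field_simp

end Lagrange

noncomputable def chebyshevAngle (n k : ℕ) : ℝ := (2 * (k : ℝ) - 1) / (2 * (n : ℝ)) * π

section chebyshevAngle

open Real Polynomial.Chebyshev

variable {n k : ℕ}

theorem chebyshevAngle_mem_Ioo (hk : k ∈ Icc 1 n) : chebyshevAngle n k ∈ Set.Ioo 0 π := by
  obtain ⟨hk1, hkn⟩ := mem_Icc.mp hk
  have hk1' : (1 : ℝ) ≤ k := by exact_mod_cast hk1
  have hkn' : (k : ℝ) ≤ n := by exact_mod_cast hkn
  unfold chebyshevAngle
  constructor
  · exact mul_pos (div_pos (by linarith) (by linarith)) pi_pos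
  · rw [div_mul_eq_mul_div, div_lt_iff₀ (by linarith)]
    nlinarith [pi_pos]

theorem sin_chebyshevAngle_pos (hk : k ∈ Icc 1 n) : 0 < sin (chebyshevAngle n k) :=
  sin_pos_of_pos_of_lt_pi (chebyshevAngle_mem_Ioo hk).1 (chebyshevAngle_mem_Ioo hk).2

theorem natCast_mul_chebyshevAngle (hn : n ≠ 0) : n * chebyshevAngle n k = k * π - π / 2 := by
  unfold chebyshevAngle
  field_simp

theorem injOn_cos_chebyshevAngle (n : ℕ) :
    Set.InjOn (fun k => cos (chebyshevAngle n k)) (Icc 1 n) := by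
  intro a ha b hb hab
  have h := injOn_cos (Set.Ioo_subset_Icc_self (chebyshevAngle_mem_Ioo ha))
    (Set.Ioo_subset_Icc_self (chebyshevAngle_mem_Ioo hb)) hab
  have hn : (n : ℝ) ≠ 0 := by norm_cast; grind
  unfold chebyshevAngle at h
  field_simp at h
  exact_mod_cast (by linarith : (a : ℝ) = b)

theorem cos_chebyshevAngle_ne_zero (he : Even n) (hk : k ∈ Icc 1 n) :
    cos (chebyshevAngle n k) ≠ 0 := by
  intro h
  have hπ2 : chebyshevAngle n k = π / 2 :=
    injOn_cos (Set.Ioo_subset_Icc_self (chebyshevAngle_mem_Ioo hk))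
      ⟨by positivity, by linarith [pi_pos]⟩ (h.trans cos_pi_div_two.symm)
  have hn : n ≠ 0 := by grind
  have h2k : 2 * (k : ℝ) = n + 1 := by
    have := natCast_mul_chebyshevAngle (k := k) hn
    rw [hπ2] at this
    nlinarith [pi_pos]
  have : 2 * k = n + 1 := by exact_mod_cast h2k
  obtain ⟨m, rfl⟩ := he
  omega

theorem eval_T_cos_chebyshevAngle (hn : n ≠ 0) :
    (T ℝ n).eval (cos (chebyshevAngle n k)) = 0 := by
  rw [T_real_cos, Int.cast_natCast, natCast_mul_chebyshevAngle hn, cos_sub_pi_div_two,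
    sin_nat_mul_pi]

theorem eval_derivative_T_cos_chebyshevAngle (hk : k ∈ Icc 1 n) :
    (T ℝ n).derivative.eval (cos (chebyshevAngle n k)) =
      -(n * (-1) ^ k) / sin (chebyshevAngle n k) := by
  have hn : n ≠ 0 := by grind
  have hsin := (sin_chebyshevAngle_pos hk).ne'
  have hU := U_real_cos (chebyshevAngle n k) (n - 1)
  rw [Int.cast_sub, Int.cast_natCast, Int.cast_one, sub_add_cancel,
    natCast_mul_chebyshevAngle hn, sin_sub_pi_div_two, cos_nat_mul_pi] at hU
  rw [T_derivative_eq_U, eval_mul, eval_intCast, Int.cast_natCast, eq_div_iff hsin, mul_assoc, hU]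
  ring

theorem eval_zero_div_mul_eval_derivative_T (he : Even n) (hk : k ∈ Icc 1 n) :
    (T ℝ n).eval 0 / ((0 - cos (chebyshevAngle n k)) *
        (T ℝ n).derivative.eval (cos (chebyshevAngle n k))) =
      1 / n * (-1) ^ (k + n / 2) * tan (chebyshevAngle n k) := by
  have hcos := cos_chebyshevAngle_ne_zero he hk
  have hsin := (sin_chebyshevAngle_pos hk).ne'
  have hn : (n : ℝ) ≠ 0 := by norm_cast; grind
  have hk2 : ((-1 : ℝ) ^ k) ^ 2 = 1 := by rw [← pow_mul, mul_comm, pow_mul]; norm_num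
  obtain ⟨m, hm⟩ := he
  have hT0 : (T ℝ n).eval 0 = (-1) ^ m := by
    rw [hm, ← two_mul, Nat.cast_mul, Nat.cast_ofNat, T_eval_two_mul_zero, Int.cast_negOnePow_natCast]
  rw [eval_derivative_T_cos_chebyshevAngle hk, hT0, tan_eq_sin_div_cos, pow_add,
    show n / 2 = m by omega, zero_sub]
  field_simp
  rw [hk2]

end chebyshevAngle

/-- Chebyshev extrapolation-to-zero weights: for even `n > 0`, Chebyshev nodes
`s_k = cos((2k-1)π/(2n))` and weights `d_k = (1/n)(-1)^{k+n/2} tan((2k-1)π/(2n))`,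
every real polynomial `f` of degree at most `n-1` satisfies
`∑_{k=1}^{n} d_k f(s_k) = f(0)`. -/
theorem chebyshev_extrapolation_weights_exact
    (n : ℕ) (hn : 0 < n) (he : Even n)
    (f : Polynomial ℝ) (hf : f.degree ≤ (n - 1 : ℕ)) :
    ∑ k ∈ Finset.Icc 1 n,
        ((1 / (n : ℝ)) * (-1 : ℝ) ^ (k + n / 2) *
            Real.tan ((2 * (k : ℝ) - 1) / (2 * (n : ℝ)) * π)) *
          f.eval (Real.cos ((2 * (k : ℝ) - 1) / (2 * (n : ℝ)) * π)) =
      f.eval 0 := by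
  have hf' : f.degree < #(Icc 1 n) := by
    rw [Nat.card_Icc, add_tsub_cancel_right]
    exact hf.trans_lt (by exact_mod_cast Nat.sub_lt hn one_pos)
  rw [Lagrange.eval_eq_sum_div_mul_eval_derivative (injOn_cos_chebyshevAngle n)
    (p := Polynomial.Chebyshev.T ℝ n) (by simp)
    (fun k _ => eval_T_cos_chebyshevAngle hn.ne') hf'
    (fun k hk => (cos_chebyshevAngle_ne_zero he hk).symm)]
  exact sum_congr rfl fun k hk => by rw [eval_zero_div_mul_eval_derivative_T he hk]; rfl
end
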